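/- arXiv:1908.01846 — 8 statements merged into one kernel-verified Lean document; each statement's English description precedes it below -/
import Mathlib

section
/- Let A be a commutative k-algebra, and let u₁, u₂: A → A be k-linear maps. Define u: A[t]/(t³) → A[t]/(t³) by u(a) = a + u₁(a)t + u₂(a)t². Suppose δ₃(u₁) = 0, where δ₃(f)(a⊗b⊗c⊗d) = abc·f(d) − ab·f(cd) + a·f(bc)·d − f(ab)·cd + f(a)·bcd. Then u(ab)·u(cd) = u(a)·u(bc)·u(d) holds modulo t³ for all a,b,c,d ∈ A if and only if δ₃(u₂)(a⊗b⊗c⊗d) = u₁(ab)·u₁(cd) − a·u₁(bc)·u₁(d) − u₁(a)·bc·u₁(d) − u₁(a)·u₁(bc)·d for all a,b,c,d ∈ A. -/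
open Polynomial

private lemma mem_span_X3_iff {A : Type*} [CommRing A] (p : Polynomial A) :
    p ∈ Ideal.span {(X : Polynomial A) ^ 3} ↔
      p.coeff 0 = 0 ∧ p.coeff 1 = 0 ∧ p.coeff 2 = 0 := by
  rw [Ideal.mem_span_singleton, X_pow_dvd_iff]
  constructor
  · intro h
    exact ⟨h 0 (by norm_num), h 1 (by norm_num), h 2 (by norm_num)⟩
  · rintro ⟨h0, h1, h2⟩ d hd
    interval_cases d <;> assumption

/-- With `u(a) = a + u₁(a)t + u₂(a)t²` on `A[t]/(t³)` and `δ₃(u₁) = 0`,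
the identity `u(ab)u(cd) = u(a)u(bc)u(d)` holds mod `t³` iff `δ₃(u₂) = u₁ ∘ u₁`. -/
theorem stmt1 {k A : Type*} [Field k] [CommRing A] [Algebra k A]
    (u₁ u₂ : A →ₗ[k] A) (u : A → Polynomial A)
    (hu : ∀ a : A, u a = Polynomial.C a + Polynomial.C (u₁ a) * Polynomial.X
        + Polynomial.C (u₂ a) * Polynomial.X ^ 2)
    (h₁ : ∀ a b c d : A,
        a * b * c * u₁ d - a * b * u₁ (c * d) + a * u₁ (b * c) * d
          - u₁ (a * b) * (c * d) + u₁ a * (b * c * d) = 0) :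
    (∀ a b c d : A,
        u (a * b) * u (c * d) - u a * u (b * c) * u d
          ∈ Ideal.span {(Polynomial.X : Polynomial A) ^ 3})
    ↔ (∀ a b c d : A,
        a * b * c * u₂ d - a * b * u₂ (c * d) + a * u₂ (b * c) * d
          - u₂ (a * b) * (c * d) + u₂ a * (b * c * d)
        = u₁ (a * b) * u₁ (c * d) - a * u₁ (b * c) * u₁ d
          - u₁ a * (b * c) * u₁ d - u₁ a * u₁ (b * c) * d) := by
  have hrw : ∀ a b c d : A,
      u (a * b) * u (c * d) - u a * u (b * c) * u d
      = C (a*b*(c*d) - a*(b*c)*d)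
        + C (a*b*u₁ (c*d) + u₁ (a*b)*(c*d)
            - (a*(b*c)*u₁ d + a*u₁ (b*c)*d + u₁ a*((b*c)*d))) * X
        + C (a*b*u₂ (c*d) + u₁ (a*b)*u₁ (c*d) + u₂ (a*b)*(c*d)
            - (a*(b*c)*u₂ d + a*u₁ (b*c)*u₁ d + a*u₂ (b*c)*d
              + u₁ a*(b*c)*u₁ d + u₁ a*u₁ (b*c)*d + u₂ a*(b*c)*d)) * X^2
        + ((C (u₁ (a*b)*u₂ (c*d) + u₂ (a*b)*u₁ (c*d)) + C (u₂ (a*b)*u₂ (c*d)) * X)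
          - (C (a*u₁ (b*c)*u₂ d + a*u₂ (b*c)*u₁ d + u₁ a*(b*c)*u₂ d + u₁ a*u₁ (b*c)*u₁ d
                + u₁ a*u₂ (b*c)*d + u₂ a*(b*c)*u₁ d + u₂ a*u₁ (b*c)*d)
              + C (a*u₂ (b*c)*u₂ d + u₁ a*u₁ (b*c)*u₂ d + u₁ a*u₂ (b*c)*u₁ d
                + u₂ a*(b*c)*u₂ d + u₂ a*u₁ (b*c)*u₁ d + u₂ a*u₂ (b*c)*d) * X
              + C (u₁ a*u₂ (b*c)*u₂ d + u₂ a*u₁ (b*c)*u₂ d + u₂ a*u₂ (b*c)*u₁ d) * X^2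
              + C (u₂ a*u₂ (b*c)*u₂ d) * X^3)) * X^3 := by
    intro a b c d
    rw [hu, hu, hu, hu, hu]
    simp only [map_add, map_sub, map_mul]
    ring
  constructor
  · intro h a b c d
    have h2 := ((mem_span_X3_iff _).mp (h a b c d)).2.2
    rw [hrw] at h2
    simp only [coeff_add, coeff_sub, coeff_C_mul, coeff_mul_C, coeff_X_pow, coeff_mul_X,
      coeff_C, coeff_mul_X_pow'] at h2
    norm_num at h2
    linear_combination -h2
  · intro h a b c d
    rw [mem_span_X3_iff, hrw]
    refine ⟨?_, ?_, ?_⟩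
    · simp only [coeff_add, coeff_sub, coeff_C_mul, coeff_mul_C, coeff_X_pow, coeff_mul_X,
        coeff_C, coeff_mul_X_pow']
      norm_num
      ring
    · simp only [coeff_add, coeff_sub, coeff_C_mul, coeff_mul_C, coeff_X_pow, coeff_mul_X,
        coeff_C, coeff_mul_X_pow']
      norm_num
      linear_combination -(h₁ a b c d)
    · simp only [coeff_add, coeff_sub, coeff_C_mul, coeff_mul_C, coeff_X_pow, coeff_mul_X,
        coeff_C, coeff_mul_X_pow']
      norm_num
      linear_combination -(h a b c d)
end

section
/- Let A be a commutative k-algebra and d ≥ 1. For a k-linear u: A → A extended to u(a) = a + u₁(a)t on A[t]/(t²): if u satisfies the d-sphere product condition (for d odd: u(a₁a₂)⋯u(a_d a_{d+1}) = u(a₁)u(a₂a₃)⋯u(a_{d−1}a_d)u(a_{d+1}); for d even: u(a₁a₂)⋯u(a_{d−1}a_d)u(a_{d+1}) = u(a₁)u(a₂a₃)⋯u(a_d a_{d+1})) modulo t², then u₁ satisfies δ_d(u₁) = 0, where δ_d(f)(a₁⊗⋯⊗a_{d+1}) = a₁⋯a_d f(a_{d+1}) + Σ_{i=1}^{d} (−1)^i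 a₁⋯a_{d−i} f(a_{d+1−i}a_{d+2−i}) a_{d+3−i}⋯a_{d+1} + (−1)^{d+1} f(a₁)a₂⋯a_{d+1}. -/
/-!
Modulo `t²`, a product of factors `u(b) = b + u₁(b) t` has linear coefficient
`∑ᵢ (∏_{j ≠ i} bⱼ) u₁(bᵢ)`. On each side of the sphere condition the factors are `u` applied to
products of consecutive letters, so the linear coefficients are sums of the terms
`a₁ ⋯ a_{m-1} u₁(a_m a_{m+1}) a_{m+2} ⋯ a_{d+1}` (`faceTerm`): those with `m` odd on one side,
those with `m` even on the other, together with the two boundary terms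
`a₁ ⋯ a_d u₁(a_{d+1})` and `u₁(a₁) a₂ ⋯ a_{d+1}` coming from the singleton factors.
Comparing the two coefficients is exactly `δ_d(u₁) = 0` after substituting `m = d + 1 - i`.
-/

open Finset Polynomial

theorem Polynomial.coeff_eq_of_sub_mem_span_X_pow {R : Type*} [CommRing R] {p q : R[X]}
    {n i : ℕ} (hi : i < n) (h : p - q ∈ Ideal.span {(X : R[X]) ^ n}) : p.coeff i = q.coeff i := by
  rw [Ideal.mem_span_singleton, X_pow_dvd_iff] at h
  simpa [sub_eq_zero] using h i hi

theorem Polynomial.coeff_one_mul {R : Type*} [CommSemiring R] (p q : R[X]) :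
    (p * q).coeff 1 = p.coeff 0 * q.coeff 1 + p.coeff 1 * q.coeff 0 := by
  rw [coeff_mul, Nat.antidiagonal_succ, sum_cons, Nat.antidiagonal_zero]
  simp [add_comm]

theorem Polynomial.coeff_one_prod_range {R : Type*} [CommSemiring R] (b c : ℕ → R) (n : ℕ) :
    (∏ i ∈ range n, (C (b i) + C (c i) * X)).coeff 1
      = ∑ m ∈ range n, (∏ j ∈ range m, b j) * c m * ∏ j ∈ Ico (m + 1) n, b j := by
  induction n with
  | zero => simp [coeff_one]
  | succ n ih =>
    have hcoeff0 : (∏ i ∈ range n, (C (b i) + C (c i) * X)).coeff 0 = ∏ i ∈ range n, b i := by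
      simp [coeff_zero_eq_eval_zero, eval_prod]
    rw [prod_range_succ, coeff_one_mul, hcoeff0, ih, sum_range_succ, Ico_self, prod_empty,
      mul_one, sum_mul, add_comm]
    simp only [coeff_add, coeff_C_mul, coeff_X_zero, coeff_X_one, coeff_C, one_ne_zero,
      if_false, if_true, mul_zero, mul_one, add_zero, zero_add]
    congr 1
    refine sum_congr rfl fun m hm => ?_
    rw [prod_Ico_succ_top (by simpa using hm)]
    ring

theorem Finset.prod_Ico_pair_eq_prod_Icc {M : Type*} [CommMonoid M] (f : ℕ → M) (s t : ℕ) :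
    ∏ i ∈ Ico s t, (f (2 * i + 1) * f (2 * i + 2)) = ∏ m ∈ Icc (2 * s + 1) (2 * t), f m := by
  induction t with
  | zero => simp
  | succ t ih =>
    rcases le_or_gt (t + 1) s with h | h
    · rw [Ico_eq_empty (by omega), Icc_eq_empty (by omega), prod_empty, prod_empty]
    · rw [prod_Ico_succ_top (by omega), ih, show 2 * (t + 1) = 2 * t + 1 + 1 by ring,
        prod_Icc_succ_top (by omega), prod_Icc_succ_top (by omega), mul_assoc]

theorem Finset.prod_Icc_add_one {M : Type*} [CommMonoid M] (f : ℕ → M) (p q : ℕ) :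
    ∏ m ∈ Icc p q, f (m + 1) = ∏ m ∈ Icc (p + 1) (q + 1), f m := by
  rw [← map_add_right_Icc, prod_map]
  rfl

theorem Finset.mul_prod_Icc_add_one {M : Type*} [CommMonoid M] (f : ℕ → M) {p q : ℕ}
    (h : p ≤ q) : f p * ∏ m ∈ Icc (p + 1) q, f m = ∏ m ∈ Icc p q, f m := by
  rw [Icc_add_one_left_eq_Ioc, mul_prod_Ioc_eq_prod_Icc h]

theorem Finset.prod_range_add_one_eq_prod_Icc {M : Type*} [CommMonoid M] (f : ℕ → M) (n : ℕ) :
    ∏ j ∈ range n, f (j + 1) = ∏ j ∈ Icc 1 n, f j := by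
  rw [← Ico_add_one_right_eq_Icc, prod_Ico_eq_prod_range]
  simp [add_comm]

theorem Finset.sum_Icc_neg_one_pow_mul_two_mul {R : Type*} [Ring R] (g : ℕ → R) (r : ℕ) :
    ∑ i ∈ Icc 1 (2 * r), (-1) ^ i * g (2 * r + 1 - i)
      = ∑ k ∈ range r, (g (2 * k + 1) - g (2 * k + 2)) := by
  induction r generalizing g with
  | zero => simp
  | succ r ih =>
    have hshift : ∑ i ∈ Icc 1 (2 * r), (-1) ^ i * g (2 * r + 1 + 1 + 1 - i)
        = ∑ k ∈ range r, (g (2 * (k + 1) + 1) - g (2 * (k + 1) + 2)) :=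
      calc _ = ∑ i ∈ Icc 1 (2 * r), (-1) ^ i * g (2 * r + 1 - i + 2) :=
            sum_congr rfl fun i hi => by rw [mem_Icc] at hi; congr 2; omega
        _ = _ := ih (fun m => g (m + 2))
    rw [show 2 * (r + 1) = 2 * r + 1 + 1 by ring, sum_Icc_succ_top (by omega),
      sum_Icc_succ_top (by omega), sum_range_succ', hshift,
      show 2 * r + 1 + 1 + 1 - (2 * r + 1) = 2 by omega,
      show 2 * r + 1 + 1 + 1 - (2 * r + 1 + 1) = 1 by omega]
    simp only [pow_succ, pow_mul, pow_zero, mul_neg, mul_one, neg_neg, one_pow, neg_mul, one_mul,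
      mul_zero, zero_add]
    abel

theorem Finset.sum_Icc_neg_one_pow_mul_two_mul_add_one {R : Type*} [Ring R] (g : ℕ → R) (r : ℕ) :
    ∑ i ∈ Icc 1 (2 * r + 1), (-1) ^ i * g (2 * r + 1 + 1 - i)
      = ∑ k ∈ range r, g (2 * k + 2) - ∑ k ∈ range (r + 1), g (2 * k + 1) := by
  have hshift : ∑ i ∈ Icc 1 (2 * r), (-1) ^ i * g (2 * r + 1 + 1 - i)
      = ∑ k ∈ range r, (g (2 * k + 2) - g (2 * (k + 1) + 1)) :=
    calc _ = ∑ i ∈ Icc 1 (2 * r), (-1) ^ i * g (2 * r + 1 - i + 1) :=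
          sum_congr rfl fun i hi => by rw [mem_Icc] at hi; congr 2; omega
      _ = _ := sum_Icc_neg_one_pow_mul_two_mul (fun m => g (m + 1)) r
  rw [sum_Icc_succ_top (by omega), hshift, sum_range_succ' _ r, sum_sub_distrib,
    show 2 * r + 1 + 1 - (2 * r + 1) = 1 by omega]
  simp only [pow_succ, pow_mul, pow_zero, mul_neg, mul_one, neg_neg, one_pow, neg_mul, one_mul,
    mul_zero, zero_add]
  abel

section FaceTerm

variable {A : Type*} [CommRing A] (f : A → A) (a : ℕ → A)

def faceTerm (n m : ℕ) : A :=
  (∏ j ∈ Icc 1 (m - 1), a j) * f (a m * a (m + 1)) * ∏ j ∈ Icc (m + 2) n, a j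

theorem faceTerm_mul_succ {n m : ℕ} (h : m + 1 ≤ n) :
    faceTerm f a n m * a (n + 1) = faceTerm f a (n + 1) m := by
  rw [faceTerm, faceTerm, prod_Icc_succ_top (by omega), mul_assoc]

theorem mul_faceTerm_comp_succ {n m : ℕ} (hm : 1 ≤ m) :
    a 1 * faceTerm f (fun j => a (j + 1)) n m = faceTerm f a (n + 1) (m + 1) := by
  rw [faceTerm, faceTerm, prod_Icc_add_one, prod_Icc_add_one (fun j => a j),
    Nat.sub_add_cancel hm, Nat.add_sub_cancel, ← mul_prod_Icc_add_one a hm, add_right_comm m 2 1]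
  ring

theorem faceTerm_sub {d i : ℕ} (hi : i ≤ d) :
    faceTerm f a (d + 1) (d + 1 - i)
      = (∏ j ∈ range (d - i), a (j + 1)) * f (a (d + 1 - i) * a (d + 2 - i))
        * ∏ j ∈ Icc (d + 3 - i) (d + 1), a j := by
  rw [faceTerm, prod_range_add_one_eq_prod_Icc, show d + 1 - i - 1 = d - i by omega,
    show d + 1 - i + 1 = d + 2 - i by omega, show d + 1 - i + 2 = d + 3 - i by omega]

variable {f} {u : A → A[X]}

theorem coeff_zero_of_eq_C_add_C_mul_X (hu : ∀ x, u x = C x + C (f x) * X) (x : A) :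
    (u x).coeff 0 = x := by
  simp [hu]

theorem coeff_one_of_eq_C_add_C_mul_X (hu : ∀ x, u x = C x + C (f x) * X) (x : A) :
    (u x).coeff 1 = f x := by
  simp [hu]

theorem coeff_zero_prod_pairs (hu : ∀ x, u x = C x + C (f x) * X) (r : ℕ) :
    (∏ i ∈ range r, u (a (2 * i + 1) * a (2 * i + 2))).coeff 0 = ∏ j ∈ Icc 1 (2 * r), a j := by
  simp only [coeff_zero_prod, coeff_zero_of_eq_C_add_C_mul_X hu]
  rw [range_eq_Ico, prod_Ico_pair_eq_prod_Icc, mul_zero, zero_add]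

theorem coeff_one_prod_pairs (hu : ∀ x, u x = C x + C (f x) * X) (r : ℕ) :
    (∏ i ∈ range r, u (a (2 * i + 1) * a (2 * i + 2))).coeff 1
      = ∑ i ∈ range r, faceTerm f a (2 * r) (2 * i + 1) := by
  simp only [hu, coeff_one_prod_range]
  refine sum_congr rfl fun i _ => ?_
  rw [range_eq_Ico, prod_Ico_pair_eq_prod_Icc, prod_Ico_pair_eq_prod_Icc, faceTerm, mul_zero,
    zero_add, Nat.add_sub_cancel, show 2 * (i + 1) + 1 = 2 * i + 1 + 2 by ring]

theorem coeff_one_prod_pairs_mul (hu : ∀ x, u x = C x + C (f x) * X) (r : ℕ) :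
    ((∏ i ∈ range r, u (a (2 * i + 1) * a (2 * i + 2))) * u (a (2 * r + 1))).coeff 1
      = ∑ i ∈ range r, faceTerm f a (2 * r + 1) (2 * i + 1)
        + (∏ j ∈ Icc 1 (2 * r), a j) * f (a (2 * r + 1)) := by
  rw [coeff_one_mul, coeff_zero_prod_pairs a hu, coeff_one_prod_pairs a hu,
    coeff_zero_of_eq_C_add_C_mul_X hu, coeff_one_of_eq_C_add_C_mul_X hu, sum_mul, add_comm]
  congr 1
  exact sum_congr rfl fun i hi => faceTerm_mul_succ f a (by rw [mem_range] at hi; omega)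

theorem coeff_zero_prod_pairs_succ (hu : ∀ x, u x = C x + C (f x) * X) (r : ℕ) :
    (∏ i ∈ range r, u (a (2 * i + 2) * a (2 * i + 3))).coeff 0
      = ∏ j ∈ Icc 2 (2 * r + 1), a j := by
  have h := coeff_zero_prod_pairs (fun j => a (j + 1)) hu r
  rw [prod_Icc_add_one] at h
  exact h

theorem coeff_one_mul_prod_pairs_succ (hu : ∀ x, u x = C x + C (f x) * X) (r : ℕ) :
    (u (a 1) * ∏ i ∈ range r, u (a (2 * i + 2) * a (2 * i + 3))).coeff 1
      = f (a 1) * ∏ j ∈ Icc 2 (2 * r + 1), a j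
        + ∑ i ∈ range r, faceTerm f a (2 * r + 1) (2 * i + 2) := by
  have h : (∏ i ∈ range r, u (a (2 * i + 2) * a (2 * i + 3))).coeff 1
      = ∑ i ∈ range r, faceTerm f (fun j => a (j + 1)) (2 * r) (2 * i + 1) :=
    coeff_one_prod_pairs (fun j => a (j + 1)) hu r
  rw [coeff_one_mul, coeff_zero_prod_pairs_succ a hu, h, coeff_zero_of_eq_C_add_C_mul_X hu,
    coeff_one_of_eq_C_add_C_mul_X hu, mul_sum, add_comm]
  congr 1
  exact sum_congr rfl fun i _ => mul_faceTerm_comp_succ f a (by omega)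

theorem coeff_one_mul_prod_pairs_succ_mul (hu : ∀ x, u x = C x + C (f x) * X) (r : ℕ) :
    (u (a 1) * (∏ i ∈ range r, u (a (2 * i + 2) * a (2 * i + 3))) * u (a (2 * r + 2))).coeff 1
      = f (a 1) * ∏ j ∈ Icc 2 (2 * r + 2), a j
        + ∑ i ∈ range r, faceTerm f a (2 * r + 2) (2 * i + 2)
        + (∏ j ∈ Icc 1 (2 * r + 1), a j) * f (a (2 * r + 2)) := by
  have hprod : (∏ j ∈ Icc 2 (2 * r + 1), a j) * a (2 * r + 2) = ∏ j ∈ Icc 2 (2 * r + 2), a j :=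
    (prod_Icc_succ_top (by omega) a).symm
  have hsum : ∑ i ∈ range r, faceTerm f a (2 * r + 1) (2 * i + 2) * a (2 * r + 2)
      = ∑ i ∈ range r, faceTerm f a (2 * r + 2) (2 * i + 2) :=
    sum_congr rfl fun i hi => faceTerm_mul_succ f a (by rw [mem_range] at hi; omega)
  rw [coeff_one_mul, coeff_one_mul_prod_pairs_succ a hu, mul_coeff_zero,
    coeff_zero_prod_pairs_succ a hu, coeff_zero_of_eq_C_add_C_mul_X hu,
    coeff_zero_of_eq_C_add_C_mul_X hu, coeff_one_of_eq_C_add_C_mul_X hu,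
    mul_prod_Icc_add_one a (by omega), add_mul, sum_mul, mul_assoc, hprod, hsum, add_comm]

end FaceTerm

theorem stmt3_general {k A : Type*} [Field k] [CommRing A] [Algebra k A]
    (d : ℕ) (u₁ : A →ₗ[k] A) (u : A → Polynomial A)
    (hu : ∀ a : A, u a = Polynomial.C a + Polynomial.C (u₁ a) * Polynomial.X)
    (hodd : Odd d → ∀ a : ℕ → A,
        (∏ i ∈ range ((d + 1) / 2), u (a (2 * i + 1) * a (2 * i + 2)))
          - u (a 1) * (∏ i ∈ range ((d - 1) / 2), u (a (2 * i + 2) * a (2 * i + 3)))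
              * u (a (d + 1))
          ∈ Ideal.span {(Polynomial.X : Polynomial A) ^ 2})
    (heven : Even d → ∀ a : ℕ → A,
        (∏ i ∈ range (d / 2), u (a (2 * i + 1) * a (2 * i + 2))) * u (a (d + 1))
          - u (a 1) * (∏ i ∈ range (d / 2), u (a (2 * i + 2) * a (2 * i + 3)))
          ∈ Ideal.span {(Polynomial.X : Polynomial A) ^ 2}) :
    ∀ a : ℕ → A,
      (∏ j ∈ range d, a (j + 1)) * u₁ (a (d + 1))
        + (∑ i ∈ Finset.Icc 1 d, (-1 : A) ^ i *
            ((∏ j ∈ range (d - i), a (j + 1)) * u₁ (a (d + 1 - i) * a (d + 2 - i))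
              * ∏ j ∈ Finset.Icc (d + 3 - i) (d + 1), a j))
        + (-1 : A) ^ (d + 1) * (u₁ (a 1) * ∏ j ∈ Finset.Icc 2 (d + 1), a j) = 0 := by
  intro a
  have hfaces : ∑ i ∈ Icc 1 d, (-1 : A) ^ i *
        ((∏ j ∈ range (d - i), a (j + 1)) * u₁ (a (d + 1 - i) * a (d + 2 - i))
          * ∏ j ∈ Icc (d + 3 - i) (d + 1), a j)
      = ∑ i ∈ Icc 1 d, (-1) ^ i * faceTerm u₁ a (d + 1) (d + 1 - i) :=
    sum_congr rfl fun i hi => by rw [faceTerm_sub _ _ (mem_Icc.1 hi).2]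
  rw [hfaces, prod_range_add_one_eq_prod_Icc]
  rcases Nat.even_or_odd' d with ⟨r, rfl | rfl⟩
  · have h := coeff_eq_of_sub_mem_span_X_pow one_lt_two (heven (even_two_mul r) a)
    rw [show 2 * r / 2 = r by omega, coeff_one_prod_pairs_mul a hu,
      coeff_one_mul_prod_pairs_succ a hu] at h
    rw [sum_Icc_neg_one_pow_mul_two_mul, sum_sub_distrib, (odd_two_mul_add_one r).neg_one_pow]
    linear_combination h
  · have h := coeff_eq_of_sub_mem_span_X_pow one_lt_two (hodd (odd_two_mul_add_one r) a)
    rw [show (2 * r + 1 + 1) / 2 = r + 1 by omega, show (2 * r + 1 - 1) / 2 = r by omega,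
      coeff_one_prod_pairs a hu, coeff_one_mul_prod_pairs_succ_mul a hu,
      show 2 * (r + 1) = 2 * r + 1 + 1 by ring, show 2 * r + 2 = 2 * r + 1 + 1 from rfl] at h
    rw [sum_Icc_neg_one_pow_mul_two_mul_add_one, (odd_two_mul_add_one r).add_one.neg_one_pow]
    linear_combination -h

/-- If `u(a) = a + u₁(a)t` satisfies the `d`-sphere product condition mod `t²`,
then `δ_d(u₁) = 0`. -/
theorem stmt3 {k A : Type*} [Field k] [CommRing A] [Algebra k A]
    (d : ℕ) (hd : 1 ≤ d) (u₁ : A →ₗ[k] A) (u : A → Polynomial A)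
    (hu : ∀ a : A, u a = Polynomial.C a + Polynomial.C (u₁ a) * Polynomial.X)
    (hodd : Odd d → ∀ a : ℕ → A,
        (∏ i ∈ range ((d + 1) / 2), u (a (2 * i + 1) * a (2 * i + 2)))
          - u (a 1) * (∏ i ∈ range ((d - 1) / 2), u (a (2 * i + 2) * a (2 * i + 3)))
              * u (a (d + 1))
          ∈ Ideal.span {(Polynomial.X : Polynomial A) ^ 2})
    (heven : Even d → ∀ a : ℕ → A,
        (∏ i ∈ range (d / 2), u (a (2 * i + 1) * a (2 * i + 2))) * u (a (d + 1))
          - u (a 1) * (∏ i ∈ range (d / 2), u (a (2 * i + 2) * a (2 * i + 3)))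
          ∈ Ideal.span {(Polynomial.X : Polynomial A) ^ 2}) :
    ∀ a : ℕ → A,
      (∏ j ∈ range d, a (j + 1)) * u₁ (a (d + 1))
        + (∑ i ∈ Finset.Icc 1 d, (-1 : A) ^ i *
            ((∏ j ∈ range (d - i), a (j + 1)) * u₁ (a (d + 1 - i) * a (d + 2 - i))
              * ∏ j ∈ Finset.Icc (d + 3 - i) (d + 1), a j))
        + (-1 : A) ^ (d + 1) * (u₁ (a 1) * ∏ j ∈ Finset.Icc 2 (d + 1), a j) = 0 :=
  stmt3_general d u₁ u hu hodd heven
end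

section
/- Let A be a commutative k-algebra and let u: A[[t]] → A[[t]] be a k[[t]]-linear map restricting to a map of the form u(a) = a + Σ_{i≥1} u_i(a)t^i on A. If u satisfies the d-sphere product condition for d = n and for d = m (as in equation (8) of the paper: for odd d, u(a₁a₂)⋯u(a_d a_{d+1}) = u(a₁)u(a₂a₃)⋯u(a_{d−1}a_d)u(a_{d+1}), and for even d the analogous identity with sides swapped), then u satisfies the d-sphere product condition for d = n + m. -/
/-!
Write `pairProd u a s N` for the product `u(a_{s+1}a_{s+2}) u(a_{s+3}a_{s+4}) ⋯` of `u` over the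
consecutive pairs of `a_{s+1}, …, a_{s+N}`, ending in the single factor `u(a_{s+N})` when `N` is
odd. The `d`-sphere condition says `pairProd u a 0 (d + 1) = u(a₁) · pairProd u a 1 d`: pairing
from the first letter equals pairing after splitting it off. Since `pairProd` is multiplicative
under concatenation at even positions, the conditions for `n` and `m` compose: split
`a₁ ⋯ a_{n+m+1}` after position `n` (`n` even) or `n + 1` (`n` odd), and apply the condition
for `n` on one block and the one for `m` on the other.
-/

open Finset

/-- The `d`-sphere product condition (equation (8) of the paper) for a map `u : A → R`
into a commutative multiplicative target: for odd `d`,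
`u(a₁a₂)⋯u(a_d a_{d+1}) = u(a₁)u(a₂a₃)⋯u(a_{d−1}a_d)u(a_{d+1})`, and for even `d` the
analogous identity with sides swapped. -/
def SphereCond {A R : Type*} [CommMonoid A] [CommMonoid R] (d : ℕ) (u : A → R) : Prop :=
  (Odd d → ∀ a : ℕ → A,
      (∏ i ∈ range ((d + 1) / 2), u (a (2 * i + 1) * a (2 * i + 2)))
        = u (a 1) * (∏ i ∈ range ((d - 1) / 2), u (a (2 * i + 2) * a (2 * i + 3)))
            * u (a (d + 1))) ∧
  (Even d → ∀ a : ℕ → A,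
      (∏ i ∈ range (d / 2), u (a (2 * i + 1) * a (2 * i + 2))) * u (a (d + 1))
        = u (a 1) * ∏ i ∈ range (d / 2), u (a (2 * i + 2) * a (2 * i + 3)))

section PairProd

variable {A R : Type*}

def pairProd [Mul A] [Monoid R] (u : A → R) (a : ℕ → A) : ℕ → ℕ → R
  | _, 0 => 1
  | s, 1 => u (a (s + 1))
  | s, N + 2 => u (a (s + 1) * a (s + 2)) * pairProd u a (s + 2) N

variable [Mul A] [Monoid R] (u : A → R) (a : ℕ → A)

theorem pairProd_two_mul_add (s N M : ℕ) :
    pairProd u a s (2 * N + M) = pairProd u a s (2 * N) * pairProd u a (s + 2 * N) M := by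
  induction N generalizing s with
  | zero => simp [pairProd]
  | succ N ih =>
    rw [show 2 * (N + 1) + M = 2 * N + M + 2 by ring, show 2 * (N + 1) = 2 * N + 2 by ring,
      pairProd, pairProd, ih, mul_assoc, show s + 2 + 2 * N = s + (2 * N + 2) by ring]

theorem pairProd_add_of_even {N : ℕ} (hN : Even N) (s M : ℕ) :
    pairProd u a s (N + M) = pairProd u a s N * pairProd u a (s + N) M := by
  obtain ⟨p, rfl⟩ := hN
  simpa only [← two_mul] using pairProd_two_mul_add u a s p M

theorem pairProd_succ_of_even {N : ℕ} (hN : Even N) (s : ℕ) :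
    pairProd u a s (N + 1) = pairProd u a s N * u (a (s + N + 1)) := by
  rw [pairProd_add_of_even u a hN, pairProd]

theorem pairProd_shift (s t N : ℕ) :
    pairProd u (fun j ↦ a (j + t)) s N = pairProd u a (s + t) N := by
  induction N using Nat.strong_induction_on generalizing s with
  | _ N ih =>
    match N, ih with
    | 0, _ => rfl
    | 1, _ => simp only [pairProd, Nat.add_right_comm]
    | N + 2, ih =>
      simp only [pairProd, ih N (by omega), Nat.add_right_comm]

end PairProd

theorem pairProd_two_mul {A R : Type*} [Mul A] [CommMonoid R] (u : A → R) (a : ℕ → A)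
    (s N : ℕ) :
    pairProd u a s (2 * N) = ∏ i ∈ range N, u (a (s + 2 * i + 1) * a (s + 2 * i + 2)) := by
  induction N with
  | zero => rfl
  | succ N ih =>
    rw [mul_add, pairProd_two_mul_add, ih, prod_range_succ, pairProd, pairProd, mul_one]

section SphereCond

variable {A R : Type*} [CommMonoid A] [CommMonoid R] {u : A → R}

theorem sphereCond_iff {d : ℕ} :
    SphereCond d u ↔ ∀ a, pairProd u a 0 (d + 1) = u (a 1) * pairProd u a 1 d := by
  have h₀ (a : ℕ → A) (N : ℕ) :
      pairProd u a 0 (2 * N) = ∏ i ∈ range N, u (a (2 * i + 1) * a (2 * i + 2)) := by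
    simp only [pairProd_two_mul, zero_add]
  have h₁ (a : ℕ → A) (N : ℕ) :
      pairProd u a 1 (2 * N) = ∏ i ∈ range N, u (a (2 * i + 2) * a (2 * i + 3)) := by
    rw [pairProd_two_mul]
    exact prod_congr rfl fun i _ ↦ by ring_nf
  rcases Nat.even_or_odd' d with ⟨p, rfl | rfl⟩
  · have hp : Even (2 * p) := even_two_mul p
    simp only [SphereCond, Nat.not_odd_iff_even.2 hp, hp, false_imp_iff, true_imp_iff, true_and,
      Nat.mul_div_cancel_left p two_pos, pairProd_succ_of_even u _ hp, zero_add, h₀, h₁]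
  · have hne : ¬Even (2 * p + 1) := Nat.not_even_iff_odd.2 (odd_two_mul_add_one p)
    simp only [SphereCond, odd_two_mul_add_one, hne, false_imp_iff, true_imp_iff, and_true,
      show (2 * p + 1 - 1) / 2 = p by omega, show 2 * p + 1 + 1 = 2 * (p + 1) by ring,
      Nat.mul_div_cancel_left _ two_pos, h₀, pairProd_succ_of_even u _ (even_two_mul p), h₁,
      show 1 + 2 * p + 1 = 2 * (p + 1) by ring, mul_assoc]

theorem SphereCond.pairProd_succ {d : ℕ} (h : SphereCond d u) (a : ℕ → A) (s : ℕ) :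
    pairProd u a s (d + 1) = u (a (s + 1)) * pairProd u a (s + 1) d := by
  simpa only [pairProd_shift, zero_add, Nat.add_comm 1 s] using
    sphereCond_iff.1 h (fun j ↦ a (j + s))

theorem SphereCond.pairProd_add_succ {n m : ℕ} (hn : SphereCond n u) (hm : SphereCond m u)
    (a : ℕ → A) (s : ℕ) :
    pairProd u a s (n + m + 1) = u (a (s + 1)) * pairProd u a (s + 1) (n + m) := by
  rcases Nat.even_or_odd' n with ⟨p, rfl | rfl⟩
  · have hN : Even (2 * p) := even_two_mul p
    calc pairProd u a s (2 * p + m + 1)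
        = pairProd u a s (2 * p) * pairProd u a (s + 2 * p) (m + 1) := by
          rw [add_assoc, pairProd_add_of_even u a hN]
      _ = pairProd u a s (2 * p) * u (a (s + 2 * p + 1)) * pairProd u a (s + 2 * p + 1) m := by
          rw [hm.pairProd_succ, mul_assoc]
      _ = u (a (s + 1)) * pairProd u a (s + 1) (2 * p) * pairProd u a (s + 2 * p + 1) m := by
          rw [← pairProd_succ_of_even u a hN, hn.pairProd_succ]
      _ = u (a (s + 1)) * pairProd u a (s + 1) (2 * p + m) := by
          rw [mul_assoc, pairProd_add_of_even u a hN, add_right_comm s 1]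
  · have hN : Even (2 * p) := even_two_mul p
    have hN₂ : Even (2 * p + 1 + 1) := ⟨p + 1, by ring⟩
    have hidx : s + (2 * p + 1 + 1) = s + 1 + 2 * p + 1 := by omega
    calc pairProd u a s (2 * p + 1 + m + 1)
        = pairProd u a s (2 * p + 1 + 1) * pairProd u a (s + (2 * p + 1 + 1)) m := by
          rw [add_right_comm, pairProd_add_of_even u a hN₂]
      _ = u (a (s + 1)) * pairProd u a (s + 1) (2 * p) *
            (u (a (s + 1 + 2 * p + 1)) * pairProd u a (s + 1 + 2 * p + 1) m) := by
          rw [hn.pairProd_succ, pairProd_succ_of_even u a hN, hidx]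
          simp only [mul_assoc]
      _ = u (a (s + 1)) * pairProd u a (s + 1) (2 * p + 1 + m) := by
          rw [← hm.pairProd_succ, mul_assoc, ← pairProd_add_of_even u a hN, add_assoc,
            add_comm 1 m]

theorem SphereCond.add {n m : ℕ} (hn : SphereCond n u) (hm : SphereCond m u) :
    SphereCond (n + m) u :=
  sphereCond_iff.2 fun a ↦ by simpa only [zero_add] using hn.pairProd_add_succ hm a 0

end SphereCond

theorem stmt4_general {A : Type*} [CommRing A]
    (u : A → PowerSeries A)
    (n m : ℕ)
    (hcn : SphereCond n u) (hcm : SphereCond m u) :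
    SphereCond (n + m) u :=
  hcn.add hcm

/-- If `u : A → A[[t]]` with `u(a) ≡ a mod t` satisfies the `d`-sphere product
condition for `d = n` and `d = m`, then it satisfies it for `d = n + m`. -/
theorem stmt4 {k A : Type*} [Field k] [CommRing A] [Algebra k A]
    (u : A → PowerSeries A) (hu : ∀ a : A, PowerSeries.constantCoeff (u a) = a)
    (n m : ℕ) (hn : 1 ≤ n) (hm : 1 ≤ m)
    (hcn : SphereCond n u) (hcm : SphereCond m u) :
    SphereCond (n + m) u :=
  stmt4_general u n m hcn hcm
end

section
/- Let (A, B, C, ε, θ) be a quintuple and M an A-bimodule which is B-symmetric. For f ∈ Hom(A, M), define ℷ¹(f)(a ⊗ (b; α, x)) = a·ε(α θ(x))·f(b) − f(ab·ε(α θ(x))) + f(a)·b·ε(α θ(x)), and for g ∈ Hom(A⊗A⊗B⊗C, M), define ℷ²(g) by ℷ²(g)(a, b, c; α, β, γ; x, y, z, w) = a ε(αβ θ(xyz)) g(b,c;γ,w) − g(ab ε(α θ(x)), c; βγ, yzw) + g(a, bc ε(γ θ(w)); αβθ(z), xy) − g(a,b;α,x)·c·ε(βγ θ(yzw)). Then ℷ²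 ∘ ℷ¹ = 0. -/
open MulOpposite

/-- For a quintuple `(A,B,C,ε,θ)` and a `B`-symmetric `A`-bimodule `M`,
the tertiary Hochschild differentials satisfy `ℷ² ∘ ℷ¹ = 0`. -/
theorem stmt12 {k A B C M : Type*} [Field k] [Ring A] [Algebra k A]
    [CommRing B] [Algebra k B] [CommRing C] [Algebra k C]
    [AddCommGroup M] [Module k M] [Module A M] [Module Aᵐᵒᵖ M]
    [SMulCommClass A Aᵐᵒᵖ M] [IsScalarTower k A M] [IsScalarTower k Aᵐᵒᵖ M]
    (ε : B →ₐ[k] A) (hε : ∀ (β : B) (a : A), ε β * a = a * ε β)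
    (θ : C →ₐ[k] B)
    (hsymm : ∀ (β : B) (u : M), ε β • u = op (ε β) • u)
    (f : A →ₗ[k] M)
    (g : A → A → B → C → M)
    (hg : ∀ (a b : A) (α : B) (x : C),
        g a b α x = (a * ε (α * θ x)) • f b - f (a * b * ε (α * θ x))
          + op (b * ε (α * θ x)) • f a) :
    ∀ (a b c : A) (α β γ : B) (x y z w : C),
      (a * ε (α * β * θ (x * y * z))) • g b c γ w
        - g (a * b * ε (α * θ x)) c (β * γ) (y * z * w)
        + g a (b * c * ε (γ * θ w)) (α * β * θ z) (x * y)
        - op (c * ε (β * γ * θ (y * z * w))) • g a b α x = 0 := by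
  intro a b c α β γ x y z w
  have hswap : ∀ (u : B) (r s : A), r * ε u * s = r * s * ε u := fun u r s => by
    rw [mul_assoc, hε u s, ← mul_assoc]
  have hmul : ∀ (u v : B) (r s : A), r * ε u * (s * ε v) = r * s * ε (u * v) :=
    fun u v r s => by rw [← mul_assoc, hswap, mul_assoc, ← map_mul]
  simp only [hg, smul_sub, smul_add]
  have h1 : (a * ε (α * β * θ (x * y * z))) • (b * ε (γ * θ w)) • f c
      = (a * b * ε (α * θ x) * ε (β * γ * θ (y * z * w))) • f c := by
    rw [smul_smul, hmul]
    rw [mul_assoc (a * b), ← map_mul]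
    rw [show (α * β * θ (x * y * z)) * (γ * θ w) = (α * θ x) * (β * γ * θ (y * z * w)) from by
      simp only [map_mul]; ring]
  have h2 : (a * ε (α * β * θ (x * y * z))) • f (b * c * ε (γ * θ w))
      = (a * ε (α * β * θ z * θ (x * y))) • f (b * c * ε (γ * θ w)) := by
    rw [show (α * β * θ (x * y * z)) = α * β * θ z * θ (x * y) from by
      simp only [map_mul]; ring]
  have h3 : f (a * b * ε (α * θ x) * c * ε (β * γ * θ (y * z * w)))
      = f (a * (b * c * ε (γ * θ w)) * ε (α * β * θ z * θ (x * y))) := by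
    congr 1
    rw [mul_assoc (a * b * ε (α * θ x)) c, hmul (α * θ x) (β * γ * θ (y * z * w)) (a * b) c]
    rw [← mul_assoc a (b * c) (ε (γ * θ w)), mul_assoc (a * (b * c)) (ε (γ * θ w)), ← map_mul,
      ← mul_assoc a b c]
    rw [show (α * θ x) * (β * γ * θ (y * z * w)) = (γ * θ w) * (α * β * θ z * θ (x * y)) from by
      simp only [map_mul]; ring]
  have h4 : (a * ε (α * β * θ (x * y * z))) • op (c * ε (γ * θ w)) • f b
      = op (c * ε (β * γ * θ (y * z * w))) • (a * ε (α * θ x)) • f b := by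
    rw [show (α * β * θ (x * y * z)) = (α * θ x) * (β * θ (y * z)) from by
      simp only [map_mul]; ring, map_mul, ← mul_assoc, mul_smul, hsymm, smul_smul, ← op_mul,
      mul_assoc c, ← map_mul]
    rw [show (γ * θ w) * (β * θ (y * z)) = β * γ * θ (y * z * w) from by
      simp only [map_mul]; ring]
    rw [smul_comm]
  have h6 : op (b * c * ε (γ * θ w) * ε (α * β * θ z * θ (x * y))) • f a
      = op (c * ε (β * γ * θ (y * z * w))) • op (b * ε (α * θ x)) • f a := by
    rw [smul_smul, ← op_mul, hmul]
    rw [mul_assoc (b * c), ← map_mul]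
    rw [show (γ * θ w) * (α * β * θ z * θ (x * y)) = (α * θ x) * (β * γ * θ (y * z * w)) from by
      simp only [map_mul]; ring]
  rw [h1, h2, h3, h4, h6]
  abel
end

section
/- Let (A, B, C, ε, θ) be a quintuple and c₁: A⊗A⊗B⊗C → A a k-linear map. Define products on A[t]/(t²) by m_{α,t}^x(a⊗b) = ab·ε(αθ(x)) + c₁(a,b;α,x)·t. Then the generalized associativity m_{αβθ(z),t}^{xy}(a ⊗ m_{γ,t}^w(b⊗c)) = m_{βγ,t}^{yzw}(m_{α,t}^x(a⊗b) ⊗ c) holds modulo t² for all a,b,c ∈ A, α,β,γ ∈ B, x,y,z,w ∈ C, if and only if ℷ²(c₁) = 0, i.e., c₁ is a 2-cocycle of the tertiary Hochschild complex. -/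
/-- For a quintuple `(A,B,C,ε,θ)` and a `k`-linear map
`c₁ : A⊗A⊗B⊗C → A`, the deformed products `m_{α,t}^x(a⊗b) = ab·ε(αθ(x)) + c₁(a,b;α,x)t`
on `A[t]/(t²)` (extended `t`-bilinearly) satisfy the generalized associativity
`m_{αβθ(z),t}^{xy}(a ⊗ m_{γ,t}^w(b⊗c)) = m_{βγ,t}^{yzw}(m_{α,t}^x(a⊗b) ⊗ c)` mod `t²`
iff `ℷ²(c₁) = 0`. -/
theorem stmt15 {k A B C : Type*} [Field k] [Ring A] [Algebra k A]
    [CommRing B] [Algebra k B] [CommRing C] [Algebra k C]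
    (ε : B →ₐ[k] A) (hε : ∀ (β : B) (a : A), ε β * a = a * ε β)
    (θ : C →ₐ[k] B)
    (c₁ : A →ₗ[k] A →ₗ[k] B →ₗ[k] C →ₗ[k] A)
    (mt : B → C → Polynomial A → Polynomial A → Polynomial A)
    (hmt : ∀ (α : B) (x : C) (p q : Polynomial A),
        mt α x p q = p * q * Polynomial.C (ε (α * θ x))
          + Polynomial.C (c₁ (p.coeff 0) (q.coeff 0) α x) * Polynomial.X) :
    (∀ (a b c : A) (α β γ : B) (x y z w : C),
        mt (α * β * θ z) (x * y) (Polynomial.C a) (mt γ w (Polynomial.C b) (Polynomial.C c))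
          - mt (β * γ) (y * z * w) (mt α x (Polynomial.C a) (Polynomial.C b)) (Polynomial.C c)
          ∈ Ideal.span {(Polynomial.X : Polynomial A) ^ 2})
    ↔ (∀ (a b c : A) (α β γ : B) (x y z w : C),
        a * ε (α * β * θ (x * y * z)) * c₁ b c γ w
          - c₁ (a * b * ε (α * θ x)) c (β * γ) (y * z * w)
          + c₁ a (b * c * ε (γ * θ w)) (α * β * θ z) (x * y)
          - c₁ a b α x * (c * ε (β * γ * θ (y * z * w))) = 0) := by
  have hkey : ∀ (a b c : A) (α β γ : B) (x y z w : C),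
      mt (α * β * θ z) (x * y) (Polynomial.C a) (mt γ w (Polynomial.C b) (Polynomial.C c))
        - mt (β * γ) (y * z * w) (mt α x (Polynomial.C a) (Polynomial.C b)) (Polynomial.C c)
      = Polynomial.C (a * ε (α * β * θ (x * y * z)) * c₁ b c γ w
        - c₁ (a * b * ε (α * θ x)) c (β * γ) (y * z * w)
        + c₁ a (b * c * ε (γ * θ w)) (α * β * θ z) (x * y)
        - c₁ a b α x * (c * ε (β * γ * θ (y * z * w)))) * Polynomial.X := by
    intro a b c α β γ x y z w
    have hCC : ∀ (u v : A) (p : Polynomial A),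
        Polynomial.C u * (Polynomial.C v * p) = Polynomial.C (u*v) * p := by
      intro u v p; rw [← mul_assoc, ← Polynomial.C_mul]
    have h0 : a * (b * (c * (ε (γ * θ w) * ε (α * (β * (θ z * θ (x * y)))))))
        = a * (b * (ε (α * θ x) * (c * ε (β * (γ * θ (y * (z * w))))))) := by
      rw [← mul_assoc (ε (α * θ x)) c, hε (α * θ x) c, mul_assoc c, ← map_mul, ← map_mul]
      congr 3
      rw [← map_mul]
      exact congrArg ε (by simp only [map_mul]; ring)
    have h1 : a * (c₁ b c γ w * ε (α * (β * (θ z * θ (x * y)))))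
        = a * (ε (α * (β * θ (x * (y * z)))) * c₁ b c γ w) := by
      rw [hε]
      congr 2
      exact congrArg ε (by simp only [map_mul]; ring)
    simp only [hmt, ← Polynomial.C_mul, Polynomial.coeff_add, Polynomial.coeff_C_zero,
      Polynomial.coeff_C_mul, Polynomial.coeff_X_zero, mul_zero, add_zero]
    simp only [mul_add, add_mul, mul_assoc, Polynomial.X_mul, hCC, ← Polynomial.C_mul,
      map_sub, map_add, sub_mul, add_mul]
    rw [h0, h1]
    abel
  constructor
  · intro h a b c α β γ x y z w
    have hm := h a b c α β γ x y z w
    rw [hkey, Ideal.mem_span_singleton'] at hm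
    obtain ⟨q, hq⟩ := hm
    have := congrArg (fun p => Polynomial.coeff p 1) hq
    simpa [Polynomial.coeff_mul_X_pow'] using this.symm
  · intro h a b c α β γ x y z w
    rw [hkey, h]
    simp
end

section
/- Let (A, B, C, ε, θ) be a quintuple with c₁, c₂: A⊗A⊗B⊗C → A, and define m_{α,t}^x(a⊗b) = ab·ε(αθ(x)) + c₁(a,b;α,x)t + c₂(a,b;α,x)t² on A[t]/(t³). Suppose ℷ²(c₁) = 0. Then generalized associativity holds modulo t³ if and only if ℷ²(c₂) = c₁ ∘ c₁, where (c₁∘c₁)(a,b,c;α,β,γ;x,y,z,w) = c₁(c₁(a,b;α,x), c; βγ, yzw) − c₁(a, c₁(b,c;γ,w); αβθ(z), xy). -/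
/-- For a quintuple `(A,B,C,ε,θ)` and `k`-linear maps `c₁, c₂`, with deformed
products `m_{α,t}^x(a⊗b) = ab·ε(αθ(x)) + c₁(a,b;α,x)t + c₂(a,b;α,x)t²` on `A[t]/(t³)`
(extended `t`-bilinearly), assuming `ℷ²(c₁) = 0`, generalized associativity holds mod `t³`
iff `ℷ²(c₂) = c₁ ∘ c₁`. -/
theorem stmt16 {k A B C : Type*} [Field k] [Ring A] [Algebra k A]
    [CommRing B] [Algebra k B] [CommRing C] [Algebra k C]
    (ε : B →ₐ[k] A) (hε : ∀ (β : B) (a : A), ε β * a = a * ε β)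
    (θ : C →ₐ[k] B)
    (c₁ c₂ : A →ₗ[k] A →ₗ[k] B →ₗ[k] C →ₗ[k] A)
    (mt : B → C → Polynomial A → Polynomial A → Polynomial A)
    (hmt : ∀ (α : B) (x : C) (p q : Polynomial A),
        mt α x p q = p * q * Polynomial.C (ε (α * θ x))
          + Polynomial.C (c₁ (p.coeff 0) (q.coeff 0) α x) * Polynomial.X
          + Polynomial.C (c₁ (p.coeff 0) (q.coeff 1) α x + c₁ (p.coeff 1) (q.coeff 0) α x
              + c₂ (p.coeff 0) (q.coeff 0) α x) * Polynomial.X ^ 2)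
    (hc₁ : ∀ (a b c : A) (α β γ : B) (x y z w : C),
        a * ε (α * β * θ (x * y * z)) * c₁ b c γ w
          - c₁ (a * b * ε (α * θ x)) c (β * γ) (y * z * w)
          + c₁ a (b * c * ε (γ * θ w)) (α * β * θ z) (x * y)
          - c₁ a b α x * (c * ε (β * γ * θ (y * z * w))) = 0) :
    (∀ (a b c : A) (α β γ : B) (x y z w : C),
        mt (α * β * θ z) (x * y) (Polynomial.C a) (mt γ w (Polynomial.C b) (Polynomial.C c))
          - mt (β * γ) (y * z * w) (mt α x (Polynomial.C a) (Polynomial.C b)) (Polynomial.C c)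
          ∈ Ideal.span {(Polynomial.X : Polynomial A) ^ 3})
    ↔ (∀ (a b c : A) (α β γ : B) (x y z w : C),
        a * ε (α * β * θ (x * y * z)) * c₂ b c γ w
          - c₂ (a * b * ε (α * θ x)) c (β * γ) (y * z * w)
          + c₂ a (b * c * ε (γ * θ w)) (α * β * θ z) (x * y)
          - c₂ a b α x * (c * ε (β * γ * θ (y * z * w)))
        = c₁ (c₁ a b α x) c (β * γ) (y * z * w)
          - c₁ a (c₁ b c γ w) (α * β * θ z) (x * y)) := by
  refine forall_congr' fun a => forall_congr' fun b => forall_congr' fun c =>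
    forall_congr' fun α => forall_congr' fun β => forall_congr' fun γ =>
    forall_congr' fun x => forall_congr' fun y => forall_congr' fun z =>
    forall_congr' fun w => ?_
  have hspan : ∀ p : Polynomial A, p ∈ Ideal.span {(Polynomial.X : Polynomial A) ^ 3}
      ↔ ∀ d < 3, p.coeff d = 0 := by
    intro p
    rw [Ideal.mem_span_singleton', ← Polynomial.X_pow_dvd_iff]
    constructor
    · rintro ⟨q, rfl⟩; exact ⟨q, (Polynomial.X_pow_mul).symm⟩
    · rintro ⟨q, rfl⟩; exact ⟨q, (Polynomial.X_pow_mul).symm⟩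
  rw [hspan]
  have key : ∀ d, d < 3 →
      ((mt (α * β * θ z) (x * y) (Polynomial.C a) (mt γ w (Polynomial.C b) (Polynomial.C c))
          - mt (β * γ) (y * z * w) (mt α x (Polynomial.C a) (Polynomial.C b)) (Polynomial.C c)).coeff d
        = if d = 2 then
            (a * ε (α * β * θ (x * y * z)) * c₂ b c γ w
          - c₂ (a * b * ε (α * θ x)) c (β * γ) (y * z * w)
          + c₂ a (b * c * ε (γ * θ w)) (α * β * θ z) (x * y)
          - c₂ a b α x * (c * ε (β * γ * θ (y * z * w))))
        - (c₁ (c₁ a b α x) c (β * γ) (y * z * w)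
          - c₁ a (c₁ b c γ w) (α * β * θ z) (x * y)) else 0) := by
    intro d hd
    rw [hmt γ w, hmt α x, hmt (α * β * θ z), hmt (β * γ)]
    have hZ : ε (α * β * θ z * θ (x * y)) = ε (α * β * θ (x * y * z)) := by
      rw [show (α * β * θ z * θ (x * y) : B) = α * β * θ (x * y * z) by
        simp only [map_mul]; ring]
    interval_cases d <;>
      simp only [Polynomial.coeff_add, Polynomial.coeff_sub, Polynomial.coeff_C_mul,
        Polynomial.coeff_mul_C, Polynomial.coeff_X_pow, Polynomial.coeff_X,
        Polynomial.coeff_C_zero, Polynomial.coeff_C, Polynomial.coeff_X_zero,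
        Polynomial.coeff_X_one, Polynomial.mul_coeff_zero, add_mul,
        map_zero, map_add, LinearMap.zero_apply, LinearMap.add_apply, zero_add, add_zero,
        mul_zero, zero_mul, mul_one, one_mul, if_true, if_false,
        show ¬((0:ℕ) = 2) by decide, show ¬((1:ℕ) = 2) by decide,
        show ¬((1:ℕ) = 0) by decide, show ¬((2:ℕ) = 0) by decide,
        show ¬((2:ℕ) = 1) by decide, reduceIte]
    · -- coefficient 0
      rw [sub_eq_zero, mul_assoc (a * b) (ε (α * θ x)) c, hε (α * θ x) c]
      simp only [mul_assoc]
      congr 3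
      simp only [← map_mul]
      exact congrArg ε (by simp only [map_mul]; ring)
    · -- coefficient 1
      have h := hc₁ a b c α β γ x y z w
      have h3 : a * ((c₁ b) c γ w) * ε (α * β * θ z * θ (x * y))
          = a * ε (α * β * θ (x * y * z)) * ((c₁ b) c γ w) := by
        rw [mul_assoc, ← hε, ← mul_assoc, hZ]
      rw [h3, mul_assoc ((c₁ a) b α x) c (ε (β * γ * θ (y * z * w))), ← h]
      abel
    · -- coefficient 2
      have h3 : a * ((c₂ b) c γ w) * ε (α * β * θ z * θ (x * y))
          = a * ε (α * β * θ (x * y * z)) * ((c₂ b) c γ w) := by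
        rw [mul_assoc, ← hε, ← mul_assoc, hZ]
      rw [h3, mul_assoc ((c₂ a) b α x) c (ε (β * γ * θ (y * z * w)))]
      abel
  constructor
  · intro H
    have h0 := H 2 (by norm_num)
    have h1 := (key 2 (by norm_num)).symm.trans h0
    simp only [if_pos rfl] at h1
    exact sub_eq_zero.mp h1
  · intro H d hd
    rw [key d hd]
    interval_cases d
    · norm_num
    · norm_num
    · rw [if_pos rfl, sub_eq_zero]; exact H
end

section
/- Let (A, B, C, ε, θ) be a quintuple, and let c₁, d₁: A⊗A⊗B⊗C → A define deformed products m_{α,t}^x and p_{α,t}^x on A[t]/(t²) by m_{α,t}^x(a⊗b) = ab ε(αθ(x)) + c₁(a,b;α,x)t and p_{α,t}^x(a⊗b) = ab ε(αθ(x)) + d₁(a,b;α,x)t. If f(a) = a + f₁(a)t satisfies p_{α,t}^x(f(a) ⊗ f(b)) = f(m_{α,t}^x(a⊗b)) modulo t² for all a,b,α,x, then c₁ − d₁ = ℷ¹(f₁), i.e., (c₁ − d₁)(a,b;α,x) = a ε(αθ(x)) f₁(b) − f₁(ab ε(αθ(x))) + f₁(a) b ε(αθ(x)). -/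
/-- For a quintuple `(A,B,C,ε,θ)` with deformed products `m_{α,t}^x` and
`p_{α,t}^x` on `A[t]/(t²)` given by cochains `c₁` and `d₁`, if `f(a) = a + f₁(a)t`
satisfies `p_{α,t}^x(f(a) ⊗ f(b)) = f(m_{α,t}^x(a⊗b))` mod `t²`, then `c₁ − d₁ = ℷ¹(f₁)`. -/
theorem stmt17 {k A B C : Type*} [Field k] [Ring A] [Algebra k A]
    [CommRing B] [Algebra k B] [CommRing C] [Algebra k C]
    (ε : B →ₐ[k] A) (hε : ∀ (β : B) (a : A), ε β * a = a * ε β)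
    (θ : C →ₐ[k] B)
    (c₁ d₁ : A →ₗ[k] A →ₗ[k] B →ₗ[k] C →ₗ[k] A)
    (f₁ : A →ₗ[k] A)
    (mt pt : B → C → Polynomial A → Polynomial A → Polynomial A)
    (hmt : ∀ (α : B) (x : C) (p q : Polynomial A),
        mt α x p q = p * q * Polynomial.C (ε (α * θ x))
          + Polynomial.C (c₁ (p.coeff 0) (q.coeff 0) α x) * Polynomial.X)
    (hpt : ∀ (α : B) (x : C) (p q : Polynomial A),
        pt α x p q = p * q * Polynomial.C (ε (α * θ x))
          + Polynomial.C (d₁ (p.coeff 0) (q.coeff 0) α x) * Polynomial.X)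
    (f : Polynomial A → Polynomial A)
    (hf : ∀ p : Polynomial A, f p = p + Polynomial.C (f₁ (p.coeff 0)) * Polynomial.X)
    (hcomm : ∀ (a b : A) (α : B) (x : C),
        pt α x (f (Polynomial.C a)) (f (Polynomial.C b))
          - f (mt α x (Polynomial.C a) (Polynomial.C b))
          ∈ Ideal.span {(Polynomial.X : Polynomial A) ^ 2}) :
    ∀ (a b : A) (α : B) (x : C),
      c₁ a b α x - d₁ a b α x
        = a * ε (α * θ x) * f₁ b - f₁ (a * b * ε (α * θ x)) + f₁ a * (b * ε (α * θ x)) := by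
  intro a b α x
  have h := hcomm a b α x
  rw [Ideal.mem_span_singleton'] at h
  obtain ⟨q, hq⟩ := h
  have hfa : f (Polynomial.C a) = Polynomial.C a + Polynomial.C (f₁ a) * Polynomial.X := by
    rw [hf]; simp
  have hfb : f (Polynomial.C b) = Polynomial.C b + Polynomial.C (f₁ b) * Polynomial.X := by
    rw [hf]; simp
  have hm : mt α x (Polynomial.C a) (Polynomial.C b)
      = Polynomial.C (a * b * ε (α * θ x)) + Polynomial.C (c₁ a b α x) * Polynomial.X := by
    rw [hmt]; simp only [Polynomial.coeff_C_zero, ← Polynomial.C_mul]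
  have hfm : f (mt α x (Polynomial.C a) (Polynomial.C b))
      = Polynomial.C (a * b * ε (α * θ x))
        + Polynomial.C (c₁ a b α x + f₁ (a * b * ε (α * θ x))) * Polynomial.X := by
    rw [hf, hm]
    simp only [Polynomial.coeff_add, Polynomial.coeff_C_zero, Polynomial.coeff_C_mul,
      Polynomial.coeff_X_zero, mul_zero, add_zero, Polynomial.C_add]
    noncomm_ring
  have hp : pt α x (f (Polynomial.C a)) (f (Polynomial.C b))
      = Polynomial.C (a * b * ε (α * θ x))
        + Polynomial.C (a * f₁ b * ε (α * θ x) + f₁ a * b * ε (α * θ x)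
            + d₁ a b α x) * Polynomial.X
        + Polynomial.C (f₁ a * f₁ b * ε (α * θ x)) * Polynomial.X ^ 2 := by
    rw [hpt, hfa, hfb]
    simp only [Polynomial.coeff_add, Polynomial.coeff_C_zero, Polynomial.coeff_C_mul,
      Polynomial.coeff_X_zero, mul_zero, add_zero, Polynomial.C_add, Polynomial.C_mul]
    noncomm_ring
    simp only [Polynomial.X_mul, mul_assoc]
    abel
  have h1 := congrArg (fun p => Polynomial.coeff p 1) hq
  rw [hp, hfm] at h1
  simp only [Polynomial.coeff_mul_X_pow', Polynomial.coeff_sub, Polynomial.coeff_add,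
    Polynomial.coeff_mul_X, Polynomial.coeff_C_zero, Polynomial.coeff_C] at h1
  norm_num [-map_mul] at h1
  have h3 : a * ε (α * θ x) * f₁ b = a * f₁ b * ε (α * θ x) := by
    rw [mul_assoc, mul_assoc, ← hε]
  rw [h3, ← mul_assoc (f₁ a)]
  linear_combination (norm := noncomm_ring) h1
end

section
/- Let A be a commutative k-algebra and define, for k-linear maps f,g,h: A → A, the maps (f∘g)(a⊗b⊗c⊗d) = f(ab)g(cd) − a f(bc) g(d) − f(a) bc g(d) − f(a) g(bc) d and (f⋆g⋆h)(a⊗b⊗c⊗d) = −f(a)g(bc)h(d). For u₁, u₂, u₃: A → A with u(a) = a + u₁(a)t + u₂(a)t² + u₃(a)t³ on A[t]/(t⁴): if u(ab)u(cd) = u(a)u(bc)u(d) holds mod t³, then it holds mod t⁴ if and only if δ₃(u₃) = u₁∘u₂ + u₂∘u₁ + u₁⋆u₁⋆u₁. -/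
open Polynomial in
set_option maxRecDepth 16000 in
set_option maxHeartbeats 2000000 in
lemma coeff3_aux {A : Type*} [CommRing A] (x y z x1 y1 z1 x2 y2 z2 x3 y3 z3 p q p1 q1 p2 q2 p3 q3 : A) :
    ((C p + C p1 * X + C p2 * X ^ 2 + C p3 * X ^ 3) * (C q + C q1 * X + C q2 * X ^ 2 + C q3 * X ^ 3)
      - (C x + C x1 * X + C x2 * X ^ 2 + C x3 * X ^ 3) * (C y + C y1 * X + C y2 * X ^ 2 + C y3 * X ^ 3)
        * (C z + C z1 * X + C z2 * X ^ 2 + C z3 * X ^ 3)).coeff 3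
    = (p * q3 + p1 * q2 + p2 * q1 + p3 * q)
      - (x * y * z3 + x * y1 * z2 + x * y2 * z1 + x * y3 * z
          + x1 * y * z2 + x1 * y1 * z1 + x1 * y2 * z
          + x2 * y * z1 + x2 * y1 * z + x3 * y * z) := by
  ring_nf
  simp only [coeff_add, coeff_sub, coeff_mul_C, coeff_C_mul, coeff_X_pow, coeff_X,
    coeff_C, coeff_mul_X_pow', coeff_X_pow_mul', coeff_neg]
  norm_num
  ring

/-- With `u(a) = a + u₁(a)t + u₂(a)t² + u₃(a)t³` on `A[t]/(t⁴)`, if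
`u(ab)u(cd) = u(a)u(bc)u(d)` holds mod `t³`, then it holds mod `t⁴` iff
`δ₃(u₃) = u₁∘u₂ + u₂∘u₁ + u₁⋆u₁⋆u₁`. -/
theorem stmt18 {k A : Type*} [Field k] [CommRing A] [Algebra k A]
    (u₁ u₂ u₃ : A →ₗ[k] A) (u : A → Polynomial A)
    (hu : ∀ a : A, u a = Polynomial.C a + Polynomial.C (u₁ a) * Polynomial.X
        + Polynomial.C (u₂ a) * Polynomial.X ^ 2 + Polynomial.C (u₃ a) * Polynomial.X ^ 3)
    (h₃ : ∀ a b c d : A,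
        u (a * b) * u (c * d) - u a * u (b * c) * u d
          ∈ Ideal.span {(Polynomial.X : Polynomial A) ^ 3}) :
    (∀ a b c d : A,
        u (a * b) * u (c * d) - u a * u (b * c) * u d
          ∈ Ideal.span {(Polynomial.X : Polynomial A) ^ 4})
    ↔ (∀ a b c d : A,
        a * b * c * u₃ d - a * b * u₃ (c * d) + a * u₃ (b * c) * d
          - u₃ (a * b) * (c * d) + u₃ a * (b * c * d)
        = (u₁ (a * b) * u₂ (c * d) - a * u₁ (b * c) * u₂ d
            - u₁ a * (b * c) * u₂ d - u₁ a * u₂ (b * c) * d)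
          + (u₂ (a * b) * u₁ (c * d) - a * u₂ (b * c) * u₁ d
            - u₂ a * (b * c) * u₁ d - u₂ a * u₁ (b * c) * d)
          + (-(u₁ a * u₁ (b * c) * u₁ d))) := by
  have hc : ∀ a b c d : A,
      (u (a * b) * u (c * d) - u a * u (b * c) * u d).coeff 3
      = ((u₁ (a * b) * u₂ (c * d) - a * u₁ (b * c) * u₂ d
            - u₁ a * (b * c) * u₂ d - u₁ a * u₂ (b * c) * d)
          + (u₂ (a * b) * u₁ (c * d) - a * u₂ (b * c) * u₁ d
            - u₂ a * (b * c) * u₁ d - u₂ a * u₁ (b * c) * d)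
          + (-(u₁ a * u₁ (b * c) * u₁ d)))
        - (a * b * c * u₃ d - a * b * u₃ (c * d) + a * u₃ (b * c) * d
          - u₃ (a * b) * (c * d) + u₃ a * (b * c * d)) := by
    intro a b c d
    rw [hu, hu, hu, hu, hu, coeff3_aux]
    ring
  constructor
  · intro h a b c d
    have h4 := h a b c d
    rw [Ideal.mem_span_singleton, Polynomial.X_pow_dvd_iff] at h4
    have := h4 3 (by norm_num)
    rw [hc] at this
    exact (sub_eq_zero.mp this).symm
  · intro h a b c d
    rw [Ideal.mem_span_singleton, Polynomial.X_pow_dvd_iff]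
    intro i hi
    interval_cases i
    · have h3 := h₃ a b c d
      rw [Ideal.mem_span_singleton, Polynomial.X_pow_dvd_iff] at h3
      exact h3 0 (by norm_num)
    · have h3 := h₃ a b c d
      rw [Ideal.mem_span_singleton, Polynomial.X_pow_dvd_iff] at h3
      exact h3 1 (by norm_num)
    · have h3 := h₃ a b c d
      rw [Ideal.mem_span_singleton, Polynomial.X_pow_dvd_iff] at h3
      exact h3 2 (by norm_num)
    · rw [hc, h a b c d]; ring
end
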